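/- For every integer k ≥ 1, the real 2×2 matrix P_k obtained by evaluating P_k(z₂, w₀) = [[(2k+1)(1−w₀)−1, −(2k+1)z₂], [−1/(2(2k+1)), 2k(1−w₀)−1]] at (z₂, w₀) = (4/3, 2/3), namely P_k = [[(2k+1)/3 − 1, −(4/3)(2k+1)], [−1/(2(2k+1)), 2k/3 − 1]], has characteristic polynomial (X − 2k/3)·(X − (2k−5)/3); equivalently its eigenvalues are λ_{Ak} = 2k/3 and λ_{Bk} = (2k−5)/3. In particular, both eigenvalues are positive for every k ≥ 3, while λ_{B1} = −1 and λ_{B2} = −1/3 are the only negative eigenvalues. -/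
import Mathlib


open Polynomial

/-- The matrix `P_k(z₂, w₀)` governing the order-`k` block of the STV ODE. -/
noncomputable def Pmat (k : ℝ) (z₂ w₀ : ℝ) : Matrix (Fin 2) (Fin 2) ℝ :=
  !![(2 * k + 1) * (1 - w₀) - 1, -(2 * k + 1) * z₂;
     -1 / (2 * (2 * k + 1)), 2 * k * (1 - w₀) - 1]

theorem Pmat_SM_charpoly_eigenvalues (k : ℕ) (hk : 1 ≤ k) :
    (Pmat (k : ℝ) (4 / 3) (2 / 3)).charpoly =
      (X - C (2 * (k : ℝ) / 3)) * (X - C ((2 * (k : ℝ) - 5) / 3)) ∧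
    (3 ≤ k → 0 < 2 * (k : ℝ) / 3 ∧ 0 < (2 * (k : ℝ) - 5) / 3) ∧
    (2 * (1 : ℝ) - 5) / 3 = -1 ∧ (2 * (2 : ℝ) - 5) / 3 = -1 / 3 := by
  refine ⟨?_, ?_, by norm_num, by norm_num⟩
  · have hk' : (2 * (2 * (k:ℝ) + 1)) ≠ 0 := by positivity
    apply Polynomial.funext
    intro x
    rw [Matrix.charpoly, Matrix.det_fin_two]
    simp [Matrix.charmatrix_apply_eq, Matrix.charmatrix_apply_ne, Pmat]
    field_simp
    ring
  · intro h3
    have : (3:ℝ) ≤ (k:ℝ) := by exact_mod_cast h3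
    constructor <;> nlinarith
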